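/- arXiv:math/0210240 — 6 statements merged into one kernel-verified Lean document; each statement's English description precedes it below -/
import Mathlib

section
/- For every integer n ≥ 1, the function h_n(x) = exp(n² - (n^{2n} + x^{2n})^{1/n}) satisfies h_n(0) = 1 and h_n^{(α)}(0) = 0 for all α ∈ {1, ..., 2n-1}. -/
open Real

theorem stmt_1 (n : ℕ) (hn : 1 ≤ n) :
    (fun x : ℝ => Real.exp ((n : ℝ) ^ 2 - ((n : ℝ) ^ (2 * n) + x ^ (2 * n)) ^ ((1 : ℝ) / n))) 0 = 1 ∧
    ∀ α ∈ Finset.Icc 1 (2 * n - 1),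
      iteratedDeriv α
        (fun x : ℝ => Real.exp ((n : ℝ) ^ 2 - ((n : ℝ) ^ (2 * n) + x ^ (2 * n)) ^ ((1 : ℝ) / n))) 0 = 0 := by
  have hn0 : (n : ℝ) ≠ 0 := Nat.cast_ne_zero.mpr (by omega)
  have hnpos : (0 : ℝ) < n := by positivity
  set u : ℝ → ℝ := fun x => (n : ℝ) ^ (2 * n) + x ^ (2 * n) with hu
  have hupos : ∀ x, 0 < u x := by
    intro x
    have h1 : (0:ℝ) < (n : ℝ) ^ (2 * n) := by positivity
    have h2 : (0:ℝ) ≤ x ^ (2 * n) := (even_two_mul n).pow_nonneg x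
    simpa [hu] using add_pos_of_pos_of_nonneg h1 h2
  set h : ℝ → ℝ := fun x => Real.exp ((n : ℝ) ^ 2 - u x ^ ((1 : ℝ) / n)) with hh
  -- smoothness of u and of t ↦ u t ^ p for any real p
  have hucd : ContDiff ℝ (⊤ : ℕ∞) u := contDiff_const.add (contDiff_id.pow (2 * n))
  have hrpow : ∀ p : ℝ, ContDiff ℝ (⊤ : ℕ∞) (fun x => u x ^ p) := by
    intro p
    rw [contDiff_iff_contDiffAt]
    intro x
    exact (hucd.contDiffAt).rpow_const_of_ne (ne_of_gt (hupos x))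
  have hhcd : ContDiff ℝ (⊤ : ℕ∞) h := (contDiff_const.sub (hrpow _)).exp
  -- derivative of h
  have hder : ∀ x : ℝ, HasDerivAt h
      (h x * -((↑(2 * n) * x ^ (2 * n - 1)) * ((1 : ℝ) / n) * u x ^ ((1 : ℝ) / n - 1))) x := by
    intro x
    have hu' : HasDerivAt u ((↑(2 * n) : ℝ) * x ^ (2 * n - 1)) x :=
      (hasDerivAt_pow (2 * n) x).const_add _
    have h1 := hu'.rpow_const (p := (1:ℝ)/n) (Or.inl (ne_of_gt (hupos x)))
    have h2 := (h1.const_sub ((n : ℝ) ^ 2)).exp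
    simpa [hh, mul_comm, mul_assoc, mul_left_comm] using h2
  have h0 : h 0 = 1 := by
    have hz : u 0 = (n : ℝ) ^ (2 * n) := by
      simp [hu, zero_pow (by omega : 2 * n ≠ 0)]
    have hval : ((n : ℝ) ^ (2 * n)) ^ ((1 : ℝ) / n) = (n : ℝ) ^ 2 := by
      rw [← Real.rpow_natCast (n : ℝ) (2 * n), ← Real.rpow_mul hnpos.le]
      have : ((2 * n : ℕ) : ℝ) * ((1 : ℝ) / n) = 2 := by
        push_cast; field_simp
      rw [this]
      rw [show ((2 : ℝ) = ((2 : ℕ) : ℝ)) by norm_num, Real.rpow_natCast]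
    show Real.exp ((n : ℝ) ^ 2 - u 0 ^ ((1 : ℝ) / n)) = 1
    rw [hz, hval, sub_self, Real.exp_zero]
  -- the key induction
  have key : ∀ j : ℕ, 1 ≤ j → j ≤ 2 * n - 1 →
      ∃ φ : ℝ → ℝ, ContDiff ℝ (⊤ : ℕ∞) φ ∧
        ∀ x, iteratedDeriv j h x = x ^ (2 * n - j) * φ x := by
    intro j hj1
    induction j, hj1 using Nat.le_induction with
    | base =>
      intro _
      refine ⟨fun x => -2 * h x * u x ^ ((1 : ℝ) / n - 1),
        (contDiff_const.mul hhcd).mul (hrpow _), ?_⟩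
      intro x
      rw [iteratedDeriv_one, (hder x).deriv]
      push_cast
      field_simp
    | succ j hj ih =>
      intro hj2
      obtain ⟨φ, hφ, heq⟩ := ih (by omega)
      have hφd : ContDiff ℝ (⊤ : ℕ∞) (deriv φ) := (contDiff_infty_iff_deriv.mp hφ).2
      refine ⟨fun x => (↑(2 * n - j) : ℝ) * φ x + x * deriv φ x,
        (contDiff_const.mul hφ).add (contDiff_id.mul hφd), ?_⟩
      intro x
      have hjlt : 1 ≤ 2 * n - j := by omega
      rw [iteratedDeriv_succ]
      have : iteratedDeriv j h = fun x => x ^ (2 * n - j) * φ x := funext heq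
      rw [this]
      have hd : HasDerivAt (fun x : ℝ => x ^ (2 * n - j) * φ x)
          ((↑(2 * n - j) : ℝ) * x ^ (2 * n - j - 1) * φ x + x ^ (2 * n - j) * deriv φ x) x :=
        (hasDerivAt_pow (2 * n - j) x).mul
          ((hφ.differentiable (by simp)).differentiableAt.hasDerivAt)
      rw [hd.deriv]
      have hexp : 2 * n - (j + 1) = 2 * n - j - 1 := by omega
      have hpow : x ^ (2 * n - j) = x ^ (2 * n - j - 1) * x := by
        rw [← pow_succ]
        congr 1
        omega
      rw [hexp, hpow]
      ring
  refine ⟨h0, ?_⟩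
  intro α hα
  rw [Finset.mem_Icc] at hα
  obtain ⟨φ, _, heq⟩ := key α hα.1 hα.2
  have := heq 0
  rw [this, zero_pow (by omega : 2 * n - α ≠ 0), zero_mul]
end

section
/- For every integer n ≥ 2 and every real ρ with |ρ| < (3/4)·n, one has n² - n² · (1 - (3/4)^{2n})^{1/n} < 1. -/
open Real

lemma geo_lt_aux (n : ℕ) (hn : 2 ≤ n) : (9/16 : ℝ)^n < 1/((n:ℝ)+1) := by
  induction n, hn using Nat.le_induction with
  | base => norm_num
  | succ m hm ih =>
    have hm0 : (0:ℝ) < (m:ℝ) + 1 := by positivity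
    have h2m : (2:ℝ) ≤ (m:ℝ) := by exact_mod_cast hm
    have : (9/16:ℝ)^(m+1) = (9/16:ℝ)^m * (9/16) := by ring
    rw [this]
    have h1 : (9/16:ℝ)^m * (9/16) < (1/((m:ℝ)+1)) * (9/16) := by
      apply mul_lt_mul_of_pos_right ih (by norm_num)
    have h2 : (1/((m:ℝ)+1)) * (9/16) ≤ 1/((m:ℝ)+1+1) := by
      rw [div_mul_eq_mul_div, div_le_div_iff₀ hm0 (by linarith)]
      nlinarith
    push_cast
    linarith

theorem stmt_4 (n : ℕ) (hn : 2 ≤ n) (ρ : ℝ) (hρ : |ρ| < (3 / 4 : ℝ) * n) :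
    (n : ℝ) ^ 2 - (n : ℝ) ^ 2 * ((1 - (3 / 4 : ℝ) ^ (2 * n)) ^ ((1 : ℝ) / n)) < 1 := by
  have hnR : (2:ℝ) ≤ (n:ℝ) := by exact_mod_cast hn
  have hn0 : (0:ℝ) < n := by linarith
  set a : ℝ := 1 - 1/(n:ℝ)^2 with ha
  have ha0 : 0 ≤ a := by
    have h : 1/(n:ℝ)^2 ≤ 1 := by
      rw [div_le_one (by positivity)]; nlinarith
    simp only [ha]; linarith
  have h1 : a ≤ Real.exp (-(1/(n:ℝ)^2)) := by
    have := Real.add_one_le_exp (-(1/(n:ℝ)^2)); simp only [ha]; linarith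
  have h2 : a^n ≤ Real.exp (-(1/(n:ℝ)^2))^n := pow_le_pow_left₀ ha0 h1 n
  have h3 : Real.exp (-(1/(n:ℝ)^2))^n = Real.exp (-(1/(n:ℝ))) := by
    rw [← Real.exp_nat_mul]
    congr 1
    field_simp
  have h4 : Real.exp (-(1/(n:ℝ))) < (n:ℝ)/((n:ℝ)+1) := by
    have hx : (1:ℝ)/(n:ℝ) ≠ 0 := by positivity
    have hlt : (1:ℝ)/(n:ℝ) + 1 < Real.exp (1/(n:ℝ)) := Real.add_one_lt_exp hx
    have hfrac : ((n:ℝ)+1)/(n:ℝ) = 1/(n:ℝ) + 1 := by field_simp; ring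
    rw [Real.exp_neg]
    have hpos : (0:ℝ) < ((n:ℝ)+1)/(n:ℝ) := by positivity
    have := (inv_lt_inv₀ (Real.exp_pos _) hpos).2 (hfrac ▸ hlt)
    calc (Real.exp (1/(n:ℝ)))⁻¹ < (((n:ℝ)+1)/(n:ℝ))⁻¹ := this
      _ = (n:ℝ)/((n:ℝ)+1) := by rw [inv_div]
  have h5 : (9/16:ℝ)^n < 1/((n:ℝ)+1) := geo_lt_aux n hn
  have hpow : (3/4:ℝ)^(2*n) = (9/16:ℝ)^n := by
    rw [pow_mul]; norm_num
  have hfrac2 : (n:ℝ)/((n:ℝ)+1) = 1 - 1/((n:ℝ)+1) := by field_simp; ring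
  have hb : a^n < 1 - (3/4:ℝ)^(2*n) := by
    rw [hpow]; linarith [h2, h3 ▸ h2]
  set b : ℝ := 1 - (3/4:ℝ)^(2*n) with hbdef
  have hb0 : 0 < b := lt_of_le_of_lt (pow_nonneg ha0 n) hb
  have key : a < b ^ ((1:ℝ)/n) := by
    have h := Real.rpow_lt_rpow (pow_nonneg ha0 n) hb (z := 1/(n:ℝ)) (by positivity)
    rwa [← Real.rpow_natCast a n, ← Real.rpow_mul ha0, mul_one_div,
      div_self (ne_of_gt hn0), Real.rpow_one] at h
  have hsq : (0:ℝ) < (n:ℝ)^2 := by positivity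
  have hmul := mul_lt_mul_of_pos_left key hsq
  have hval : (n:ℝ)^2 * a = (n:ℝ)^2 - 1 := by
    simp only [ha]; field_simp
  clear_value a b
  linarith
end

section
/- Let m ∈ (0,1), ρ > e, and let φ(t) = ρ^{-t} · t^{m(t+1/2)} · e^{-m t} for t ≥ 1/2. If t_ρ ∈ [1/2, ∞) satisfies ln t_ρ + 1/(2 t_ρ) = (1/m)·ln ρ (so φ'(t_ρ) = 0), then 1/2 < ρ^{1/m} - t_ρ < (1/2)·e^{1/(2 t_ρ)}. -/
open Real

theorem stmt_7 (m ρ : ℝ) (hm : m ∈ Set.Ioo (0 : ℝ) 1) (hρ : Real.exp 1 < ρ)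
    (tρ : ℝ) (htρ : 1 / 2 ≤ tρ)
    (hcrit : Real.log tρ + 1 / (2 * tρ) = (1 / m) * Real.log ρ) :
    1 / 2 < ρ ^ (1 / m : ℝ) - tρ ∧
    ρ ^ (1 / m : ℝ) - tρ < (1 / 2) * Real.exp (1 / (2 * tρ)) := by
  have hρ0 : 0 < ρ := lt_trans (Real.exp_pos 1) hρ
  have ht0 : 0 < tρ := lt_of_lt_of_le (by norm_num) htρ
  set x := 1 / (2 * tρ) with hxdef
  have hx0 : 0 < x := by positivity
  have hxt : x * tρ = 1 / 2 := by rw [hxdef]; field_simp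
  have hrw : ρ ^ (1 / m : ℝ) = tρ * Real.exp x := by
    rw [Real.rpow_def_of_pos hρ0, mul_comm, ← hcrit, Real.exp_add, Real.exp_log ht0]
  have h1 : x + 1 < Real.exp x := Real.add_one_lt_exp (ne_of_gt hx0)
  have h2 : -x + 1 < Real.exp (-x) := Real.add_one_lt_exp (by linarith : -x ≠ 0)
  have hexn : Real.exp (-x) * Real.exp x = 1 := by
    rw [← Real.exp_add]; simp
  have hep : 0 < Real.exp x := Real.exp_pos x
  constructor
  · rw [hrw]; nlinarith
  · rw [hrw]; nlinarith [mul_pos ht0 hep]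
end

section
/- Let m ∈ (0,1), ρ > e, φ(t) = ρ^{-t}·t^{m(t+1/2)}·e^{-mt}, and suppose t_ρ ≥ 1/2 satisfies ln t_ρ + 1/(2 t_ρ) = (1/m) ln ρ. Then φ(t_ρ) = √ρ · exp(-m(t_ρ + 1/2 + 1/(4 t_ρ))), and consequently √ρ · e^{-m/2} · e^{-m ρ^{1/m}} < φ(t_ρ) < √ρ · e^{-m ρ^{1/m}}. -/
open Real

/-
Write `x = 1 / (2 t_ρ)`. The critical-point equation says `ln ρ = m (ln t_ρ + x)`, so
`ρ^{1/m} = t_ρ e^x`, and substituting `ln ρ` into `ln φ(t_ρ)` gives the closed form. The bounds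
then compare `t_ρ + 1/2 + t_ρ x²` (note `1/(4 t_ρ) = t_ρ x²` and `1/2 = t_ρ x`) with `t_ρ e^x`,
which for `0 < x ≤ 1` is the pair of elementary estimates `1 + x² < e^x < 1 + x + x²`.
-/

lemma one_add_sq_lt_exp {x : ℝ} (hx0 : 0 < x) (hx1 : x ≤ 1) : 1 + x ^ 2 < exp x := by
  have := add_one_lt_exp hx0.ne'
  nlinarith

lemma exp_lt_one_add_add_sq {x : ℝ} (hx0 : 0 < x) (hx1 : x ≤ 1) : exp x < 1 + x + x ^ 2 := by
  have hb := exp_bound (x := x) (by rwa [abs_of_pos hx0]) (by norm_num : 0 < 2)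
  have h2 : |exp x - (1 + x)| ≤ x ^ 2 * (3 / (2 * 2)) := by
    simpa [Finset.sum_range_succ] using hb
  nlinarith [(abs_le.1 h2).2]

lemma rpow_one_div_eq_mul_exp_of_log_add_eq {m ρ t : ℝ} (hρ : 0 < ρ) (ht : 0 < t)
    (hcrit : log t + 1 / (2 * t) = 1 / m * log ρ) :
    ρ ^ (1 / m) = t * exp (1 / (2 * t)) := by
  rw [rpow_def_of_pos hρ, mul_comm, ← hcrit, exp_add, exp_log ht]

lemma rpow_neg_mul_rpow_mul_exp_eq_of_log_add_eq {m ρ t : ℝ} (hm : m ≠ 0) (hρ : 0 < ρ)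
    (ht : 0 < t) (hcrit : log t + 1 / (2 * t) = 1 / m * log ρ) :
    ρ ^ (-t) * t ^ (m * (t + 1 / 2)) * exp (-m * t) =
      √ρ * exp (-m * (t + 1 / 2 + 1 / (4 * t))) := by
  have hlogρ : log ρ = m * (log t + 1 / (2 * t)) := by
    rw [hcrit]; field_simp
  rw [rpow_def_of_pos hρ, rpow_def_of_pos ht, sqrt_eq_rpow, rpow_def_of_pos hρ,
    ← exp_add, ← exp_add, ← exp_add, hlogρ]
  congr 1
  field_simp
  ring

theorem stmt_8 (m ρ : ℝ) (hm : m ∈ Set.Ioo (0 : ℝ) 1) (hρ : Real.exp 1 < ρ)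
    (φ : ℝ → ℝ)
    (hφ : φ = fun t : ℝ => ρ ^ (-t) * t ^ (m * (t + 1 / 2)) * Real.exp (-m * t))
    (tρ : ℝ) (htρ : 1 / 2 ≤ tρ)
    (hcrit : Real.log tρ + 1 / (2 * tρ) = (1 / m) * Real.log ρ) :
    φ tρ = Real.sqrt ρ * Real.exp (-m * (tρ + 1 / 2 + 1 / (4 * tρ))) ∧
    Real.sqrt ρ * Real.exp (-m / 2) * Real.exp (-m * ρ ^ (1 / m : ℝ)) < φ tρ ∧
    φ tρ < Real.sqrt ρ * Real.exp (-m * ρ ^ (1 / m : ℝ)) := by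
  obtain ⟨hm0, -⟩ := hm
  have hρ0 : 0 < ρ := (exp_pos 1).trans hρ
  have ht0 : 0 < tρ := by linarith
  have hval : φ tρ = √ρ * exp (-m * (tρ + 1 / 2 + 1 / (4 * tρ))) := by
    rw [hφ]
    exact rpow_neg_mul_rpow_mul_exp_eq_of_log_add_eq hm0.ne' hρ0 ht0 hcrit
  rw [rpow_one_div_eq_mul_exp_of_log_add_eq hρ0 ht0 hcrit, hval]
  have hhalf : 1 / 2 = tρ * (1 / (2 * tρ)) := by field_simp
  have hquarter : 1 / (4 * tρ) = tρ * (1 / (2 * tρ)) ^ 2 := by field_simp; ring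
  set x := 1 / (2 * tρ)
  have hx0 : 0 < x := by positivity
  have hx1 : x ≤ 1 := by rw [div_le_one (by linarith)]; linarith
  refine ⟨rfl, ?_, ?_⟩
  · rw [mul_assoc, ← exp_add, mul_lt_mul_iff_right₀ (sqrt_pos.2 hρ0), exp_lt_exp]
    nlinarith [mul_lt_mul_of_pos_left (one_add_sq_lt_exp hx0 hx1) (mul_pos hm0 ht0)]
  · rw [mul_lt_mul_iff_right₀ (sqrt_pos.2 hρ0), exp_lt_exp]
    nlinarith [mul_lt_mul_of_pos_left (exp_lt_one_add_add_sq hx0 hx1) (mul_pos hm0 ht0)]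
end

section
/- Let m ∈ (0,1), ℓ > 1, p ∈ (0,1), C > 0, and let (r_n)_n be a positive sequence decreasing to 0. Suppose (c_k)_{k∈ℤ} satisfies |c_k| ≤ C·p^{|k|^{1/m}} for all k. Define F_n = sup_{|k| > 1/r_n} ℓ^{|k|}·|c_k|. Then limsup_{n→∞} F_n^{r_n} = 0. -/
open Real Filter

theorem stmt_18 (m ℓ p C : ℝ) (hm : m ∈ Set.Ioo (0 : ℝ) 1) (hℓ : 1 < ℓ)
    (hp : p ∈ Set.Ioo (0 : ℝ) 1) (hC : 0 < C)
    (r : ℕ → ℝ) (hr : ∀ n, 0 < r n) (hdec : StrictAnti r)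
    (hlim : Tendsto r atTop (nhds 0))
    (c : ℤ → ℂ)
    (hc : ∀ k : ℤ, ‖c k‖ ≤ C * p ^ ((k.natAbs : ℝ) ^ (1 / m : ℝ))) :
    limsup (fun n : ℕ =>
        (sSup {x : ℝ | ∃ k : ℤ, 1 / r n < (k.natAbs : ℝ) ∧
            x = ℓ ^ (k.natAbs) * ‖c k‖}) ^ (r n)) atTop = 0 := by
  obtain ⟨hm0, hm1⟩ := hm
  obtain ⟨hp0, hp1⟩ := hp
  have hℓ0 : (0:ℝ) < ℓ := lt_trans one_pos hℓ
  set a : ℝ := 1 / m with ha_def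
  have ha : 1 < a := (one_lt_div hm0).mpr hm1
  have ha0 : 0 < a := lt_trans one_pos ha
  have hlp : Real.log p < 0 := Real.log_neg hp0 hp1
  -- the auxiliary sequence g j = ℓ^j * p^((1/2) j^a) tends to 0
  set g : ℕ → ℝ := fun j => ℓ ^ j * p ^ ((1/2 : ℝ) * (j:ℝ) ^ a) with hg_def
  have hgt : Tendsto g atTop (nhds 0) := by
    have hE : Tendsto (fun j : ℕ =>
        ((j:ℝ) ^ a) * ((j:ℝ) ^ (1 - a) * Real.log ℓ + (1/2) * Real.log p)) atTop atBot := by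
      have hf1 : Tendsto (fun j : ℕ => ((j:ℝ) ^ a)) atTop atTop :=
        (tendsto_rpow_atTop ha0).comp tendsto_natCast_atTop_atTop
      have hf2 : Tendsto (fun j : ℕ => ((j:ℝ) ^ (1 - a) * Real.log ℓ + (1/2) * Real.log p))
          atTop (nhds ((1/2) * Real.log p)) := by
        have h1 : Tendsto (fun j : ℕ => ((j:ℝ) ^ (1 - a))) atTop (nhds 0) := by
          have := (tendsto_rpow_neg_atTop (show (0:ℝ) < a - 1 by linarith)).comp
            (tendsto_natCast_atTop_atTop (R := ℝ))
          simpa [Function.comp_def, neg_sub] using this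
        have := (h1.mul_const (Real.log ℓ)).add_const ((1/2) * Real.log p)
        simpa using this
      exact hf1.atTop_mul_neg (by linarith [mul_pos one_half_pos (neg_pos.mpr hlp)]) hf2
    have hexp : Tendsto (fun j : ℕ =>
        Real.exp (((j:ℝ) ^ a) * ((j:ℝ) ^ (1 - a) * Real.log ℓ + (1/2) * Real.log p)))
        atTop (nhds 0) := Real.tendsto_exp_atBot.comp hE
    refine hexp.congr' ?_
    filter_upwards [eventually_ge_atTop 1] with j hj
    have hj0 : (0:ℝ) < (j:ℝ) := by exact_mod_cast hj
    have hpow : ((j:ℝ) ^ a) * ((j:ℝ) ^ (1 - a)) = (j:ℝ) := by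
      rw [← Real.rpow_add hj0]; simp
    simp only [hg_def]
    rw [← Real.rpow_natCast ℓ j, Real.rpow_def_of_pos hℓ0, Real.rpow_def_of_pos hp0,
      ← Real.exp_add]
    congr 1
    rw [mul_add, ← mul_assoc, hpow]
    ring
  obtain ⟨B, hB⟩ := hgt.bddAbove_range
  set M : ℝ := max B 1 with hM_def
  have hM1 : (1:ℝ) ≤ M := le_max_right _ _
  have hM0 : (0:ℝ) < M := lt_of_lt_of_le one_pos hM1
  have hgM : ∀ j : ℕ, g j ≤ M := fun j =>
    le_trans (hB (Set.mem_range_self j)) (le_max_left _ _)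
  -- the set and its bounds
  set F : ℕ → ℝ := fun n => sSup {x : ℝ | ∃ k : ℤ, 1 / r n < (k.natAbs : ℝ) ∧
      x = ℓ ^ (k.natAbs) * ‖c k‖} with hF_def
  set u : ℕ → ℝ := fun n => C * M * p ^ ((1/2 : ℝ) * (1 / r n) ^ a) with hu_def
  have hrpos : ∀ n, (0:ℝ) < 1 / r n := fun n => one_div_pos.mpr (hr n)
  have key : ∀ n : ℕ, ∀ k : ℤ, 1 / r n < (k.natAbs : ℝ) →
      ℓ ^ (k.natAbs) * ‖c k‖ ≤ u n := by
    intro n k hk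
    set j : ℕ := k.natAbs with hj_def
    have h1 : ‖c k‖ ≤ C * p ^ ((j:ℝ) ^ a) := hc k
    have hsplit : p ^ ((j:ℝ) ^ a) = p ^ ((1/2 : ℝ) * (j:ℝ) ^ a) * p ^ ((1/2 : ℝ) * (j:ℝ) ^ a) := by
      rw [← Real.rpow_add hp0]; ring_nf
    have hmono : p ^ ((1/2 : ℝ) * (j:ℝ) ^ a) ≤ p ^ ((1/2 : ℝ) * (1 / r n) ^ a) := by
      apply Real.rpow_le_rpow_of_exponent_ge hp0 hp1.le
      have : (1 / r n) ^ a ≤ (j:ℝ) ^ a :=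
        Real.rpow_le_rpow (hrpos n).le hk.le ha0.le
      nlinarith
    calc ℓ ^ j * ‖c k‖ ≤ ℓ ^ j * (C * p ^ ((j:ℝ) ^ a)) :=
          mul_le_mul_of_nonneg_left h1 (pow_pos hℓ0 j).le
      _ = C * (g j * p ^ ((1/2 : ℝ) * (j:ℝ) ^ a)) := by
          rw [hsplit, hg_def]; ring
      _ ≤ C * (M * p ^ ((1/2 : ℝ) * (1 / r n) ^ a)) := by
          apply mul_le_mul_of_nonneg_left _ hC.le
          exact mul_le_mul (hgM j) hmono (Real.rpow_pos_of_pos hp0 _).le hM0.le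
      _ = u n := by rw [hu_def]; ring
  have hne : ∀ n : ℕ, ∃ x, x ∈ {x : ℝ | ∃ k : ℤ, 1 / r n < (k.natAbs : ℝ) ∧
      x = ℓ ^ (k.natAbs) * ‖c k‖} ∧ 0 ≤ x := by
    intro n
    set K : ℕ := ⌊1 / r n⌋₊ + 1 with hK_def
    have hKabs : ((K : ℤ)).natAbs = K := Int.natAbs_natCast K
    refine ⟨ℓ ^ ((K : ℤ)).natAbs * ‖c (K : ℤ)‖,
      ⟨(K : ℤ), ?_, rfl⟩, by positivity⟩
    rw [hKabs]
    exact_mod_cast Nat.lt_floor_add_one (1 / r n)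
  have hbdd : ∀ n : ℕ, BddAbove {x : ℝ | ∃ k : ℤ, 1 / r n < (k.natAbs : ℝ) ∧
      x = ℓ ^ (k.natAbs) * ‖c k‖} := by
    intro n
    exact ⟨u n, fun x hx => by obtain ⟨k, hk, rfl⟩ := hx; exact key n k hk⟩
  have hF0 : ∀ n, 0 ≤ F n := by
    intro n
    obtain ⟨x, hx, hx0⟩ := hne n
    exact le_trans hx0 (le_csSup (hbdd n) hx)
  have hFu : ∀ n, F n ≤ u n := by
    intro n
    apply Real.sSup_le
    · intro x hx; obtain ⟨k, hk, rfl⟩ := hx; exact key n k hk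
    · have : (0:ℝ) < u n := by
        rw [hu_def]; positivity
      exact this.le
  -- the upper bound tends to 0 after raising to r n
  have hu_tendsto : Tendsto (fun n => (u n) ^ (r n)) atTop (nhds 0) := by
    have heq : ∀ n, (u n) ^ (r n) =
        (C * M) ^ (r n) * p ^ ((1/2 : ℝ) * (1 / r n) ^ (a - 1)) := by
      intro n
      have hCM : (0:ℝ) ≤ C * M := (mul_pos hC hM0).le
      rw [hu_def]
      rw [Real.mul_rpow hCM (Real.rpow_pos_of_pos hp0 _).le, ← Real.rpow_mul hp0.le]
      · have h1 : (1 / r n) ^ a * r n = (1 / r n) ^ (a - 1) := by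
          rw [Real.rpow_sub (hrpos n), Real.rpow_one]
          field_simp
        congr 1
        rw [mul_assoc, h1]
    have h1 : Tendsto (fun n => (C * M) ^ (r n)) atTop (nhds 1) := by
      have hcont : ContinuousAt (fun x : ℝ => (C * M) ^ x) 0 :=
        Real.continuousAt_const_rpow (mul_pos hC hM0).ne'
      have := hcont.tendsto.comp hlim
      simpa [Function.comp_def, Real.rpow_zero] using this
    have h2 : Tendsto (fun n => p ^ ((1/2 : ℝ) * (1 / r n) ^ (a - 1))) atTop (nhds 0) := by
      have hinv : Tendsto (fun n => (r n)⁻¹) atTop atTop := by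
        apply Filter.Tendsto.inv_tendsto_nhdsGT_zero
        exact tendsto_nhdsWithin_iff.mpr ⟨hlim, Eventually.of_forall fun n => hr n⟩
      have hpow : Tendsto (fun n => (1 / r n) ^ (a - 1)) atTop atTop := by
        have := (tendsto_rpow_atTop (show (0:ℝ) < a - 1 by linarith)).comp hinv
        simpa [Function.comp_def, one_div] using this
      have hE : Tendsto (fun n => (1/2 : ℝ) * (1 / r n) ^ (a - 1)) atTop atTop :=
        hpow.const_mul_atTop one_half_pos
      have hEexp : Tendsto (fun n => Real.log p * ((1/2 : ℝ) * (1 / r n) ^ (a - 1)))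
          atTop atBot := by
        have := hE.atTop_mul_const_of_neg hlp
        simpa [mul_comm] using this
      have := Real.tendsto_exp_atBot.comp hEexp
      refine this.congr fun n => ?_
      rw [Real.rpow_def_of_pos hp0]
      rfl
    have := h1.mul h2
    rw [mul_zero] at this
    exact this.congr fun n => (heq n).symm
  have hmain : Tendsto (fun n : ℕ => (F n) ^ (r n)) atTop (nhds 0) := by
    apply squeeze_zero (fun n => Real.rpow_nonneg (hF0 n) _)
      (fun n => Real.rpow_le_rpow (hF0 n) (hFu n) (hr n).le) hu_tendsto
  exact hmain.limsup_eq
end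

section
/- Let m ∈ (0,1), ν > 0, and suppose (c_k)_{k∈ℤ} are complex numbers such that for some C₂ > 0 and all α ∈ ℕ with α ≥ 1 and all k ∈ ℤ, |k|^α |c_k| ≤ C₂ · ν^α · α^{m(α+1/2)} · e^{-mα}. Then for all k with |k| > e·ν, |c_k| ≤ C₂ · (|k|/ν)^{1/2} · e^{-m (|k|/ν)^{1/m}}; in particular limsup_{k→±∞} |c_k|^{|k|^{-1/m}} ≤ e^{-m/ν^{1/m}}. -/
open Real Filter Topology

/-- artanh inequality: `2x ≤ log ((1+x)/(1-x))` for `x ∈ [0,1)`. -/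
lemma my_artanh {x : ℝ} (h0 : 0 ≤ x) (h1 : x < 1) :
    2 * x ≤ Real.log ((1 + x) / (1 - x)) := by
  set f : ℝ → ℝ := fun y => Real.log (1 + y) - Real.log (1 - y) - 2 * y with hf
  have hderiv : ∀ y ∈ Set.Ioo (0:ℝ) 1,
      HasDerivAt f (1/(1+y) - (-1)/(1-y) - 2*1) y := by
    intro y hy
    have hy1 : (1:ℝ) + y ≠ 0 := by nlinarith [hy.1]
    have hy2 : (1:ℝ) - y ≠ 0 := by nlinarith [hy.2]
    have d1 : HasDerivAt (fun y : ℝ => 1 + y) 1 y := by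
      simpa using (hasDerivAt_id y).const_add 1
    have d2 : HasDerivAt (fun y : ℝ => 1 - y) (-1) y := by
      simpa using (hasDerivAt_id y).const_sub 1
    exact ((d1.log hy1).sub (d2.log hy2)).sub ((hasDerivAt_id y).const_mul 2)
  have hmono : MonotoneOn f (Set.Ico (0:ℝ) 1) := by
    apply monotoneOn_of_deriv_nonneg (convex_Ico 0 1)
    · apply ContinuousOn.sub
      apply ContinuousOn.sub
      · exact ((continuous_const.add continuous_id).continuousOn).log
          (fun y hy => by have := hy.1; dsimp at *; nlinarith)
      · exact ((continuous_const.sub continuous_id).continuousOn).log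
          (fun y hy => by have := hy.2; dsimp at *; nlinarith)
      · exact (continuous_const.mul continuous_id).continuousOn
    · intro y hy
      rw [interior_Ico] at hy
      exact (hderiv y hy).differentiableAt.differentiableWithinAt
    · intro y hy
      rw [interior_Ico] at hy
      rw [(hderiv y hy).deriv]
      have hy1 : (0:ℝ) < 1 + y := by nlinarith [hy.1]
      have hy2 : (0:ℝ) < 1 - y := by nlinarith [hy.2]
      have heq : 1/(1+y) - (-1)/(1-y) - 2*1 = 2*y^2 / ((1+y)*(1-y)) := by
        field_simp
        ring
      rw [heq]
      positivity
  have h1x : (0:ℝ) < 1 + x := by linarith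
  have h2x : (0:ℝ) < 1 - x := by linarith
  have := hmono (Set.left_mem_Ico.2 one_pos) ⟨h0, h1⟩ h0
  simp only [hf, Real.log_one, add_zero, sub_zero, Real.log_div h1x.ne' h2x.ne'] at this ⊢
  simp at this
  linarith

/-- Key inequality: for `1 ≤ a ≤ t ≤ a+1`, `t - a ≤ (a + 1/2)(log t - log a)`. -/
lemma my_keylog {a t : ℝ} (ha : 1 ≤ a) (hat : a ≤ t) (hta : t ≤ a + 1) :
    t - a ≤ (a + 1/2) * (Real.log t - Real.log a) := by
  have ha0 : (0:ℝ) < a := by linarith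
  have ht0 : (0:ℝ) < t := by linarith
  have hta0 : (0:ℝ) < t + a := by linarith
  set x : ℝ := (t - a) / (t + a) with hx
  have hx0 : 0 ≤ x := div_nonneg (by linarith) hta0.le
  have hx1 : x < 1 := by
    rw [div_lt_one hta0]; linarith
  have hratio : (1 + x) / (1 - x) = t / a := by
    have h1 : 1 - x = 2 * a / (t + a) := by rw [hx, eq_div_iff hta0.ne', sub_mul, div_mul_cancel₀ _ hta0.ne']; ring
    have h2 : 1 + x = 2 * t / (t + a) := by rw [hx, eq_div_iff hta0.ne', add_mul, div_mul_cancel₀ _ hta0.ne']; ring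
    rw [h1, h2]
    field_simp
  have hlog : 2 * x ≤ Real.log t - Real.log a := by
    have := my_artanh hx0 hx1
    rwa [hratio, Real.log_div ht0.ne' ha0.ne'] at this
  have hxval : x * (t + a) = t - a := div_mul_cancel₀ _ hta0.ne'
  have h2 : (a + 1/2) * (2 * x) ≤ (a + 1/2) * (Real.log t - Real.log a) :=
    mul_le_mul_of_nonneg_left hlog (by linarith)
  have h3 : t - a ≤ (a + 1/2) * (2 * x) := by
    nlinarith [mul_nonneg hx0 (by linarith : (0:ℝ) ≤ a + 1 - t)]
  linarith

theorem stmt_19 (m ν : ℝ) (hm : m ∈ Set.Ioo (0 : ℝ) 1) (hν : 0 < ν)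
    (c : ℤ → ℂ) (C₂ : ℝ) (hC₂ : 0 < C₂)
    (hc : ∀ α : ℕ, 1 ≤ α → ∀ k : ℤ,
      (k.natAbs : ℝ) ^ α * ‖c k‖ ≤
        C₂ * ν ^ α * (α : ℝ) ^ (m * (α + 1 / 2) : ℝ) * Real.exp (-m * α)) :
    (∀ k : ℤ, Real.exp 1 * ν < (k.natAbs : ℝ) →
      ‖c k‖ ≤ C₂ * ((k.natAbs : ℝ) / ν) ^ (1 / 2 : ℝ) *
        Real.exp (-m * ((k.natAbs : ℝ) / ν) ^ (1 / m : ℝ))) ∧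
    limsup (fun k : ℤ => ‖c k‖ ^ ((k.natAbs : ℝ) ^ (-(1 / m) : ℝ))) cofinite ≤
      Real.exp (-m / ν ^ (1 / m : ℝ)) := by
  obtain ⟨hm0, hm1⟩ := hm
  have hm0' : m ≠ 0 := hm0.ne'
  have hinvm : 0 < 1/m := by positivity
  -- Part 1
  have h1 : ∀ k : ℤ, Real.exp 1 * ν < (k.natAbs : ℝ) →
      ‖c k‖ ≤ C₂ * ((k.natAbs : ℝ) / ν) ^ (1 / 2 : ℝ) *
        Real.exp (-m * ((k.natAbs : ℝ) / ν) ^ (1 / m : ℝ)) := by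
    intro k hk
    set n : ℝ := (k.natAbs : ℝ) with hn
    have hn0 : 0 < n := lt_trans (by positivity) hk
    set ρ : ℝ := n / ν with hρdef
    have hρe : Real.exp 1 < ρ := (lt_div_iff₀ hν).2 (by linarith)
    have hρ1 : 1 < ρ := lt_trans (by simpa using Real.one_lt_exp_iff_of_pos.mpr one_pos) hρe
    have hρ0 : 0 < ρ := by linarith
    set t : ℝ := ρ ^ (1/m : ℝ) with htdef
    have ht1 : 1 < t := (Real.one_lt_rpow_iff_of_pos hρ0).2 (Or.inl ⟨hρ1, hinvm⟩)
    have ht0 : 0 < t := by linarith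
    set α : ℕ := ⌊t⌋₊ with hαdef
    have hα1 : 1 ≤ α := Nat.le_floor (by exact_mod_cast ht1.le)
    have hαr1 : (1:ℝ) ≤ (α:ℝ) := by exact_mod_cast hα1
    have hα0 : (0:ℝ) < (α:ℝ) := by linarith
    have hαt : (α:ℝ) ≤ t := Nat.floor_le ht0.le
    have htα : t ≤ (α:ℝ) + 1 := (Nat.lt_floor_add_one t).le
    have hB := my_keylog hαr1 hαt htα
    -- log facts
    have hlogρ : Real.log ρ = Real.log n - Real.log ν := Real.log_div hn0.ne' hν.ne'
    have hlogt : Real.log t = (1/m) * Real.log ρ := Real.log_rpow hρ0 _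
    have hlogρ' : Real.log ρ = m * Real.log t := by
      rw [hlogt]; field_simp
    -- key exponential estimate
    have hkey : ν ^ α * ((α:ℝ) ^ (m * ((α:ℝ) + 1/2) : ℝ)) * Real.exp (-m * α)
        ≤ n ^ α * (ρ ^ (1/2 : ℝ) * Real.exp (-m * t)) := by
      have e1 : ν ^ α = Real.exp (Real.log ν * α) := by
        rw [← Real.rpow_natCast ν α, Real.rpow_def_of_pos hν]
      have e2 : ((α:ℝ) ^ (m * ((α:ℝ) + 1/2) : ℝ)) =
          Real.exp (Real.log α * (m * ((α:ℝ) + 1/2))) := Real.rpow_def_of_pos hα0 _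
      have e3 : n ^ α = Real.exp (Real.log n * α) := by
        rw [← Real.rpow_natCast n α, Real.rpow_def_of_pos hn0]
      have e4 : ρ ^ (1/2 : ℝ) = Real.exp (Real.log ρ * (1/2)) := Real.rpow_def_of_pos hρ0 _
      rw [e1, e2, e3, e4, ← Real.exp_add, ← Real.exp_add, ← Real.exp_add, ← Real.exp_add, Real.exp_le_exp]
      have hmB : m * (t - (α:ℝ)) ≤ m * (((α:ℝ) + 1/2) * (Real.log t - Real.log α)) :=
        mul_le_mul_of_nonneg_left hB hm0.le
      have hlogn : Real.log n = Real.log ν + m * Real.log t := by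
        rw [← hlogρ']; linarith [hlogρ]
      rw [hlogn, hlogρ']
      ring_nf
      ring_nf at hmB
      nlinarith [hmB]
    -- combine with hypothesis
    have hmain := hc α hα1 k
    have hchain : n ^ α * ‖c k‖ ≤
        n ^ α * (C₂ * ρ ^ (1/2 : ℝ) * Real.exp (-m * t)) := by
      calc n ^ α * ‖c k‖ ≤ C₂ * ν ^ α * (α : ℝ) ^ (m * (α + 1 / 2) : ℝ) * Real.exp (-m * α) :=
            hmain
        _ = C₂ * (ν ^ α * ((α:ℝ) ^ (m * ((α:ℝ) + 1/2) : ℝ)) * Real.exp (-m * α)) := by ring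
        _ ≤ C₂ * (n ^ α * (ρ ^ (1/2 : ℝ) * Real.exp (-m * t))) :=
            mul_le_mul_of_nonneg_left hkey hC₂.le
        _ = n ^ α * (C₂ * ρ ^ (1/2 : ℝ) * Real.exp (-m * t)) := by ring
    exact le_of_mul_le_mul_left hchain (pow_pos hn0 α)
  refine ⟨h1, ?_⟩
  -- Part 2
  set L : ℝ := Real.exp (-m / ν ^ (1/m : ℝ)) with hL
  have hνm0 : 0 < ν ^ (1/m : ℝ) := Real.rpow_pos_of_pos hν _
  -- natAbs tends to atTop along cofinite
  have htabs : Tendsto (fun k : ℤ => ((k.natAbs : ℝ))) cofinite atTop := by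
    rw [tendsto_atTop]
    intro b
    rw [eventually_cofinite]
    apply Set.Finite.subset (Set.finite_Icc (-(⌈b⌉₊ : ℤ)) (⌈b⌉₊ : ℤ))
    intro k hk
    simp only [Set.mem_setOf_eq, not_le] at hk
    have h2 : k.natAbs < ⌈b⌉₊ := by exact_mod_cast hk.trans_le (Nat.le_ceil b)
    simp only [Set.mem_Icc]
    omega
  -- the comparison function
  set v : ℤ → ℝ := fun k =>
    (C₂ * ((k.natAbs : ℝ) / ν) ^ (1/2 : ℝ)) ^ ((k.natAbs : ℝ) ^ (-(1/m) : ℝ)) * L with hv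
  -- tendsto of the real-variable prefactor
  have hF : Tendsto (fun x : ℝ => (C₂ * (x / ν) ^ (1/2 : ℝ)) ^ (x ^ (-(1/m) : ℝ)))
      atTop (𝓝 1) := by
    have hEq : ∀ᶠ x in atTop, (C₂ * (x / ν) ^ (1/2 : ℝ)) ^ (x ^ (-(1/m) : ℝ)) =
        Real.exp ((x ^ (-(1/m) : ℝ)) *
          (Real.log C₂ + (1/2) * (Real.log x - Real.log ν))) := by
      filter_upwards [eventually_gt_atTop (0:ℝ)] with x hx
      have hxν : 0 < x / ν := div_pos hx hν
      have hbase : 0 < C₂ * (x / ν) ^ (1/2 : ℝ) :=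
        mul_pos hC₂ (Real.rpow_pos_of_pos hxν _)
      rw [Real.rpow_def_of_pos hbase,
        Real.log_mul hC₂.ne' (Real.rpow_pos_of_pos hxν _).ne',
        Real.log_rpow hxν, Real.log_div hx.ne' hν.ne']
      ring_nf
    have hexp : Tendsto (fun x : ℝ => (x ^ (-(1/m) : ℝ)) *
        (Real.log C₂ + (1/2) * (Real.log x - Real.log ν))) atTop (𝓝 0) := by
      have t1 : Tendsto (fun x : ℝ => x ^ (-(1/m) : ℝ)) atTop (𝓝 0) :=
        tendsto_rpow_neg_atTop hinvm
      have t2 : Tendsto (fun x : ℝ => x ^ (-(1/m) : ℝ) * Real.log x) atTop (𝓝 0) := by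
        have := (isLittleO_log_rpow_atTop hinvm).tendsto_div_nhds_zero
        apply this.congr'
        filter_upwards [eventually_gt_atTop (0:ℝ)] with x hx
        rw [Real.rpow_neg hx.le, div_eq_inv_mul]
      have hcomb := (t1.mul_const (Real.log C₂ - (1/2) * Real.log ν)).add (t2.const_mul (1/2))
      simp only [zero_mul, mul_zero, add_zero] at hcomb
      apply hcomb.congr
      intro x
      ring
    refine Tendsto.congr' (hEq.mono fun x h => h.symm) ?_
    have := (Real.continuous_exp.tendsto 0).comp hexp
    simpa [Function.comp_def] using this
  have hvtend : Tendsto v cofinite (𝓝 L) := by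
    have := ((hF.comp htabs).mul_const L)
    simpa [hv, Function.comp] using this
  -- eventual bound
  have hub : ∀ᶠ k in cofinite,
      ‖c k‖ ^ ((k.natAbs : ℝ) ^ (-(1/m) : ℝ)) ≤ v k := by
    filter_upwards [htabs.eventually (eventually_gt_atTop (Real.exp 1 * ν))] with k hk
    set n : ℝ := (k.natAbs : ℝ) with hn
    have hn0 : 0 < n := lt_trans (by positivity) hk
    have hp : (0:ℝ) ≤ n ^ (-(1/m) : ℝ) := Real.rpow_nonneg hn0.le _
    have h1k := h1 k hk
    have hρ0 : 0 < n / ν := div_pos hn0 hν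
    have step1 : ‖c k‖ ^ (n ^ (-(1/m) : ℝ)) ≤
        (C₂ * (n / ν) ^ (1/2 : ℝ) * Real.exp (-m * (n / ν) ^ (1/m : ℝ))) ^ (n ^ (-(1/m) : ℝ)) :=
      Real.rpow_le_rpow (norm_nonneg _) h1k hp
    have hb1 : (0:ℝ) ≤ C₂ * (n / ν) ^ (1/2 : ℝ) := by positivity
    have step2 : (C₂ * (n / ν) ^ (1/2 : ℝ) * Real.exp (-m * (n / ν) ^ (1/m : ℝ))) ^
          (n ^ (-(1/m) : ℝ)) =
        (C₂ * (n / ν) ^ (1/2 : ℝ)) ^ (n ^ (-(1/m) : ℝ)) *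
          Real.exp ((-m * (n / ν) ^ (1/m : ℝ)) * (n ^ (-(1/m) : ℝ))) := by
      rw [Real.mul_rpow hb1 (Real.exp_nonneg _), ← Real.exp_mul]
    have hexpo : (-m * (n / ν) ^ (1/m : ℝ)) * (n ^ (-(1/m) : ℝ)) = -m / ν ^ (1/m : ℝ) := by
      have hdiv : (n / ν) ^ (1/m : ℝ) = n ^ (1/m : ℝ) / ν ^ (1/m : ℝ) :=
        Real.div_rpow hn0.le hν.le _
      have hnn : n ^ (1/m : ℝ) * n ^ (-(1/m) : ℝ) = 1 := by
        rw [← Real.rpow_add hn0]; simp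
      rw [hdiv]
      calc (-m * (n ^ (1/m:ℝ) / ν ^ (1/m:ℝ))) * n ^ (-(1/m):ℝ)
          = -m * (n ^ (1/m:ℝ) * n ^ (-(1/m):ℝ)) / ν ^ (1/m:ℝ) := by ring
        _ = -m / ν ^ (1/m:ℝ) := by rw [hnn, mul_one]
    rw [step2, hexpo] at step1
    exact step1
  -- conclude with limsup
  exact le_of_le_of_eq
    (limsup_le_limsup hub
      (isCoboundedUnder_le_of_le cofinite
        (fun k => Real.rpow_nonneg (norm_nonneg _) _))
      hvtend.isBoundedUnder_le)
    (hvtend.limsup_eq)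
end
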